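/- Let G be a finite simple graph with at least one vertex and let Gᵉ be its higher-dimensional context extension. Then the map sending each state p on Gᵉ to its restriction p|_{V(G)} is a bijection from the set of states on Gᵉ onto the set of substates on G; in particular, every substate on G extends uniquely to a state on Gᵉ. -/

import Mathlib

open Finset

/-- A maximal clique of a simple graph, as a finite set of vertices. -/
def IsMaxClique {V : Type*} (G : SimpleGraph V) (C : Finset V) : Prop :=
  G.IsClique (C : Set V) ∧ ∀ D : Finset V, G.IsClique (D : Set V) → C ⊆ D → D = C

/-- The finite set of all maximal cliques of a finite simple graph. -/
noncomputable def maxCliques {V : Type*} [Fintype V] (G : SimpleGraph V) :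
    Finset (Finset V) := by
  classical exact Finset.univ.filter (fun C => IsMaxClique G C)

/-- `c(G)`: the total number of maximal cliques of `G`. -/
noncomputable def numMaxCliques {V : Type*} [Fintype V] (G : SimpleGraph V) : ℕ :=
  (maxCliques G).card

/-- `c_G(i)`: the number of maximal cliques of `G` containing the vertex `i`. -/
noncomputable def cG {V : Type*} [Fintype V] (G : SimpleGraph V) (i : V) : ℕ := by
  classical exact ((maxCliques G).filter (fun C => i ∈ C)).card

/-- A state on a finite simple graph: values in `[0,1]` summing to `1` on each
maximal clique. -/
def IsGraphState {V : Type*} [Fintype V] (G : SimpleGraph V) (p : V → ℝ) : Prop :=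
  (∀ i, 0 ≤ p i ∧ p i ≤ 1) ∧ ∀ C ∈ maxCliques G, ∑ i ∈ C, p i = 1

/-- An independent set of a simple graph: pairwise non-adjacent vertices. -/
def IsIndep {V : Type*} (G : SimpleGraph V) (I : Finset V) : Prop :=
  ∀ i ∈ I, ∀ j ∈ I, i ≠ j → ¬ G.Adj i j

/-- `α(G; w)`: the maximum weight of an independent set of `G` for the weight `w`. -/
noncomputable def alphaW {V : Type*} [Fintype V] (G : SimpleGraph V) (w : V → ℝ) : ℝ :=
  sSup { x : ℝ | ∃ I : Finset V, IsIndep G I ∧ x = ∑ i ∈ I, w i }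

/-- The higher-dimensional context extension `Gᵉ` of `G`: one new vertex is added for
each maximal clique of `G`, adjacent exactly to the vertices of that clique; the new
vertices are pairwise non-adjacent and the old adjacency is kept. -/
noncomputable def contextExtension {V : Type*} [Fintype V] (G : SimpleGraph V) :
    SimpleGraph (V ⊕ {C : Finset V // C ∈ maxCliques G}) where
  Adj x y :=
    match x, y with
    | Sum.inl a, Sum.inl b => G.Adj a b
    | Sum.inl a, Sum.inr C => a ∈ (C : Finset V)
    | Sum.inr C, Sum.inl a => a ∈ (C : Finset V)
    | Sum.inr _, Sum.inr _ => False
  symm := by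
    constructor
    rintro (a | C) (b | D) h
    · exact G.adj_symm h
    · exact h
    · exact h
    · exact h
  loopless := by
    constructor
    rintro (a | C) h
    · exact G.irrefl h
    · exact h

/-- A substate on a finite simple graph: values in `[0,1]` summing to at most `1` on
each maximal clique. -/
def IsSubstate {V : Type*} [Fintype V] (G : SimpleGraph V) (p : V → ℝ) : Prop :=
  (∀ i, 0 ≤ p i ∧ p i ≤ 1) ∧ ∀ C ∈ maxCliques G, ∑ i ∈ C, p i ≤ 1

/-! The maximal cliques of `Gᵉ` are exactly the sets `C ∪ {x_C}` for `C` a maximal clique of `G`: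
a clique of `Gᵉ` through `x_C` lies in `C ∪ {x_C}`, and one avoiding all new vertices is a clique
of `G`, hence lies in some maximal `C`. So a state `p` on `Gᵉ` is a `[0,1]`-valued map with
`p x_C = 1 - ∑_{a ∈ C} p a` for every `C`: its restriction is a substate and determines `p`, and
the same formula extends every substate to a state. -/

section ContextExtension

variable {V : Type*} {G : SimpleGraph V}

lemma isMaxClique_iff_maximal {C : Finset V} :
    IsMaxClique G C ↔ Maximal (fun D : Finset V => G.IsClique (D : Set V)) C := by
  simp only [IsMaxClique, maximal_iff, eq_comm]

variable [Fintype V]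

lemma mem_maxCliques {C : Finset V} : C ∈ maxCliques G ↔ IsMaxClique G C := by
  simp [maxCliques]

lemma exists_mem_maxCliques_superset {A : Finset V} (hA : G.IsClique (A : Set V)) :
    ∃ C ∈ maxCliques G, A ⊆ C := by
  obtain ⟨C, hAC, hC⟩ :=
    Finite.exists_le_maximal (p := fun D : Finset V => G.IsClique (D : Set V)) hA
  exact ⟨C, mem_maxCliques.2 (isMaxClique_iff_maximal.2 hC), hAC⟩

@[simp]
lemma contextExtension_adj_inl_inr {a : V} {C : maxCliques G} :
    (contextExtension G).Adj (.inl a) (.inr C) ↔ a ∈ (C : Finset V) := Iff.rfl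

@[simp]
lemma contextExtension_adj_inr_inl {a : V} {C : maxCliques G} :
    (contextExtension G).Adj (.inr C) (.inl a) ↔ a ∈ (C : Finset V) := Iff.rfl

@[simp]
lemma contextExtension_not_adj_inr_inr {C D : maxCliques G} :
    ¬ (contextExtension G).Adj (.inr C) (.inr D) := id

/-- The clique `C ∪ {x_C}` of `Gᵉ`. -/
def extClique (C : maxCliques G) : Finset (V ⊕ maxCliques G) :=
  .cons (.inr C) ((C : Finset V).map .inl) (by simp)

@[simp]
lemma inl_mem_extClique {a : V} {C : maxCliques G} :
    Sum.inl a ∈ extClique C ↔ a ∈ (C : Finset V) := by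
  simp [extClique]

@[simp]
lemma inr_mem_extClique {C D : maxCliques G} : Sum.inr D ∈ extClique C ↔ D = C := by
  simp [extClique]

lemma sum_extClique (C : maxCliques G) (p : V ⊕ maxCliques G → ℝ) :
    ∑ x ∈ extClique C, p x = p (.inr C) + ∑ a ∈ (C : Finset V), p (.inl a) := by
  simp [extClique]

lemma isClique_extClique (C : maxCliques G) :
    (contextExtension G).IsClique (extClique C : Set (V ⊕ maxCliques G)) := by
  have hC : G.IsClique (C : Set V) := (mem_maxCliques.1 C.2).1
  rintro (a | C₁) ha (b | C₂) hb hab <;>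
    simp only [Finset.mem_coe, inl_mem_extClique, inr_mem_extClique] at ha hb
  · exact hC ha hb (by simpa using hab)
  all_goals simp_all

lemma subset_extClique_of_inr_mem {D : Finset (V ⊕ maxCliques G)}
    (hD : (contextExtension G).IsClique (D : Set _)) {C : maxCliques G} (hC : .inr C ∈ D) :
    D ⊆ extClique C := by
  rintro (a | C') hx
  · simpa using hD hx hC (by simp)
  · by_contra hC'
    exact contextExtension_not_adj_inr_inr (hD hx hC (by simpa using hC'))

lemma isMaxClique_extClique (C : maxCliques G) :
    IsMaxClique (contextExtension G) (extClique C) :=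
  ⟨isClique_extClique C, fun _ hD hCD =>
    (subset_extClique_of_inr_mem hD (hCD (by simp))).antisymm hCD⟩

lemma exists_subset_extClique {D : Finset (V ⊕ maxCliques G)}
    (hD : (contextExtension G).IsClique (D : Set _)) : ∃ C, D ⊆ extClique C := by
  by_cases h : ∃ C, .inr C ∈ D
  · obtain ⟨C, hC⟩ := h
    exact ⟨C, subset_extClique_of_inr_mem hD hC⟩
  push Not at h
  classical
  have hA : G.IsClique ({a | .inl a ∈ D} : Finset V) := fun a ha b hb hab =>
    @hD (.inl a) (by simpa using ha) (.inl b) (by simpa using hb) (by simpa using hab)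
  obtain ⟨C, hC, hAC⟩ := exists_mem_maxCliques_superset hA
  refine ⟨⟨C, hC⟩, ?_⟩
  rintro (a | C') hx
  · exact inl_mem_extClique.2 (hAC (by simpa using hx))
  · exact absurd hx (h C')

lemma mem_maxCliques_contextExtension {D : Finset (V ⊕ maxCliques G)} :
    D ∈ maxCliques (contextExtension G) ↔ ∃ C, extClique C = D := by
  refine ⟨fun hD => ?_, fun ⟨C, hC⟩ => hC ▸ mem_maxCliques.2 (isMaxClique_extClique C)⟩
  obtain ⟨hDclique, hDmax⟩ := mem_maxCliques.1 hD
  obtain ⟨C, hDC⟩ := exists_subset_extClique hDclique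
  exact ⟨C, (hDmax _ (isClique_extClique C) hDC)⟩

lemma isGraphState_contextExtension_iff {p : V ⊕ maxCliques G → ℝ} :
    IsGraphState (contextExtension G) p ↔
      (∀ x, 0 ≤ p x ∧ p x ≤ 1) ∧ ∀ C, p (.inr C) + ∑ a ∈ (C : Finset V), p (.inl a) = 1 := by
  simp only [IsGraphState, mem_maxCliques_contextExtension, forall_exists_index,
    forall_apply_eq_imp_iff, sum_extClique]

def extendSubstate (q : V → ℝ) : V ⊕ maxCliques G → ℝ :=
  Sum.elim q fun C => 1 - ∑ a ∈ (C : Finset V), q a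

lemma IsGraphState.restrict_isSubstate {p : V ⊕ maxCliques G → ℝ}
    (hp : IsGraphState (contextExtension G) p) : IsSubstate G (p ∘ Sum.inl) := by
  obtain ⟨hbound, hsum⟩ := isGraphState_contextExtension_iff.1 hp
  refine ⟨fun a => hbound (.inl a), fun C hC => ?_⟩
  have := hsum ⟨C, hC⟩
  have := (hbound (.inr ⟨C, hC⟩)).1
  simp only [Function.comp_apply]
  linarith

lemma IsGraphState.extendSubstate_restrict {p : V ⊕ maxCliques G → ℝ}
    (hp : IsGraphState (contextExtension G) p) : extendSubstate (p ∘ Sum.inl) = p := by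
  obtain ⟨-, hsum⟩ := isGraphState_contextExtension_iff.1 hp
  ext (a | C)
  · rfl
  · simp only [extendSubstate, Sum.elim_inr, Function.comp_apply]
    linarith [hsum C]

lemma IsSubstate.isGraphState_extendSubstate {q : V → ℝ} (hq : IsSubstate G q) :
    IsGraphState (contextExtension G) (extendSubstate q) := by
  obtain ⟨hbound, hsum⟩ := hq
  refine isGraphState_contextExtension_iff.2 ⟨?_, fun C => by simp [extendSubstate]⟩
  rintro (a | C)
  · exact hbound a
  · have := hsum C C.2
    have := sum_nonneg fun a (_ : a ∈ (C : Finset V)) => (hbound a).1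
    simp only [extendSubstate, Sum.elim_inr]
    constructor <;> linarith

end ContextExtension

theorem states_contextExtension_bijOn_substates_general {V : Type*} [Fintype V]
    (G : SimpleGraph V) :
    Set.BijOn (fun p : (V ⊕ {C : Finset V // C ∈ maxCliques G}) → ℝ => p ∘ Sum.inl)
      {p | IsGraphState (contextExtension G) p}
      {q | IsSubstate G q} :=
  Set.InvOn.bijOn (f' := extendSubstate)
    ⟨fun _ hp => IsGraphState.extendSubstate_restrict hp, fun _ _ => rfl⟩
    (fun _ hp => IsGraphState.restrict_isSubstate hp)
    (fun _ hq => IsSubstate.isGraphState_extendSubstate hq)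

/-- **Restriction is a bijection between states on `Gᵉ` and substates on `G`**: the map
sending a state `p` on the higher-dimensional context extension `Gᵉ` to its restriction
to the vertices of `G` is a bijection from the states on `Gᵉ` onto the substates on `G`;
in particular every substate on `G` extends uniquely to a state on `Gᵉ`. -/
theorem states_contextExtension_bijOn_substates {V : Type*} [Fintype V] [Nonempty V]
    (G : SimpleGraph V) :
    Set.BijOn (fun p : (V ⊕ {C : Finset V // C ∈ maxCliques G}) → ℝ => p ∘ Sum.inl)
      {p | IsGraphState (contextExtension G) p}
      {q | IsSubstate G q} :=
  states_contextExtension_bijOn_substates_general G
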